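/- Let u_n = Σ_{k=0}^n C(n,k)^2·C(n+k,k)·C(2k,n). Then for all integers n ≥ 2, u_{2n} ≡ u_n (mod 8). -/

import Mathlib

/-!
Since `C(n,k) C(n+k,k) = C(n+k,2k) C(2k,k)` and `C(2k,n) C(n,k) = C(2k,k) C(k,n-k)`, the `k`-th
summand of `u_n` equals `C(n+k,2k) C(2k,k)² C(k,n-k)`. As `C(2k,k)` is even for `k ≥ 1`, every
summand with `k ≥ 1` is divisible by `4` (and the one with `k = 0` vanishes), and by Lucas'
theorem `C(2k,k)/2` is odd exactly when `k` is a power of two. For `k = 2^m`, `C(k,n-k)` is even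
unless `n = k` or `n = 2k`. Hence, for `n ≥ 2`, all summands are `≡ 0 (mod 8)` unless
`n = 2^(m+1)`, in which case exactly the summands `k = 2^m` and `k = n` are `≡ 4 (mod 8)`.
So `8 ∣ u_n` for all `n ≥ 2`, and `u_{2n} ≡ 0 ≡ u_n`.
-/

/-- Cooper's sporadic sequence `s₇`. -/
def cooperS7 (n : ℕ) : ℤ :=
  ∑ k ∈ Finset.range (n + 1),
    (n.choose k : ℤ) ^ 2 * ((n + k).choose k : ℤ) * ((2 * k).choose n : ℤ)

namespace Nat

theorem exists_two_mul_eq_two_pow_iff {a : ℕ} : (∃ m, 2 * a = 2 ^ m) ↔ ∃ m, a = 2 ^ m := by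
  constructor
  · rintro ⟨_ | m, h⟩
    · omega
    · exact ⟨m, by rw [pow_succ] at h; omega⟩
  · rintro ⟨m, rfl⟩
    exact ⟨m + 1, by ring⟩

theorem odd_choose_two_mul_add_one_iff (k : ℕ) :
    Odd ((2 * k + 1).choose k) ↔ ∃ m, k + 1 = 2 ^ m := by
  induction k using Nat.strong_induction_on with
  | _ k ih =>
  -- Lucas' theorem at the last binary digit.
  have hlucas : (2 * k + 1).choose k ≡ k.choose (k / 2) [MOD 2] := by
    have := Choose.choose_modEq_choose_mod_mul_choose_div_nat (p := 2) (n := 2 * k + 1) (k := k)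
    rcases Nat.mod_two_eq_zero_or_one k with h | h <;>
      simpa [h, show (2 * k + 1) % 2 = 1 by omega, show (2 * k + 1) / 2 = k by omega] using this
  rw [Nat.odd_iff, hlucas, ← Nat.odd_iff]
  obtain ⟨j, rfl | rfl⟩ := Nat.even_or_odd' k
  · rcases j.eq_zero_or_pos with rfl | hj
    · exact ⟨fun _ => ⟨0, rfl⟩, fun _ => odd_one⟩
    · rw [show 2 * j / 2 = j by omega, ← centralBinom_eq_two_mul_choose]
      have hB : Even j.centralBinom := even_iff_two_dvd.2 (two_dvd_centralBinom_of_one_le hj)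
      refine iff_of_false (Nat.not_odd_iff_even.2 hB) ?_
      rintro ⟨_ | m, h⟩
      · omega
      · rw [pow_succ] at h; omega
  · rw [show (2 * j + 1) / 2 = j by omega, ih j (by omega),
      show 2 * j + 1 + 1 = 2 * (j + 1) by ring, exists_two_mul_eq_two_pow_iff]

theorem centralBinom_succ_eq_two_mul_choose (k : ℕ) :
    (k + 1).centralBinom = 2 * (2 * k + 1).choose k := by
  rw [centralBinom_eq_two_mul_choose, show 2 * (k + 1) = 2 * k + 1 + 1 by ring,
    Nat.choose_succ_succ, choose_symm_half]
  omega

theorem odd_centralBinom_div_two_iff (k : ℕ) : Odd (k.centralBinom / 2) ↔ ∃ m, k = 2 ^ m := by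
  cases k with
  | zero =>
    refine iff_of_false (by simp) ?_
    rintro ⟨m, h⟩
    exact (pow_ne_zero m two_ne_zero) h.symm
  | succ k =>
    rw [centralBinom_succ_eq_two_mul_choose, Nat.mul_div_cancel_left _ two_pos,
      odd_choose_two_mul_add_one_iff]

theorem odd_choose_two_pow_mul_three (m : ℕ) : Odd ((2 ^ m * 3).choose (2 * 2 ^ m)) := by
  rw [Nat.odd_iff, mul_comm 2, Choose.choose_pow_mul_pow_mul_modEq_choose_nat]
  rfl

end Nat

open Nat Finset

def cooperS7Term (n k : ℕ) : ℕ :=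
  (n + k).choose (2 * k) * k.centralBinom ^ 2 * k.choose (n - k)

theorem choose_sq_mul_choose_add_mul_choose_two_mul {n k : ℕ} (hk : k ≤ n) :
    n.choose k ^ 2 * (n + k).choose k * (2 * k).choose n = cooperS7Term n k := by
  have h₁ : (n + k).choose k * n.choose k = (n + k).choose (2 * k) * k.centralBinom := by
    rw [centralBinom_eq_two_mul_choose, Nat.choose_mul (by omega), show n + k - k = n by omega,
      show 2 * k - k = k by omega]
  have h₂ : (2 * k).choose n * n.choose k = k.centralBinom * k.choose (n - k) := by
    rw [Nat.choose_mul hk, centralBinom_eq_two_mul_choose, show 2 * k - k = k by omega]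
  calc _ = ((n + k).choose k * n.choose k) * ((2 * k).choose n * n.choose k) := by ring
    _ = _ := by rw [h₁, h₂, cooperS7Term]; ring

theorem cooperS7_eq_sum_cooperS7Term (n : ℕ) :
    cooperS7 n = ∑ k ∈ range (n + 1), (cooperS7Term n k : ℤ) := by
  refine sum_congr rfl fun k hk => ?_
  rw [← choose_sq_mul_choose_add_mul_choose_two_mul (Nat.lt_succ_iff.1 (mem_range.1 hk))]
  push_cast
  rfl

theorem eight_dvd_cooperS7Term {n k : ℕ} (hn : n ≠ 0) (hkn : k ≤ n)
    (h : ∀ m, k = 2 ^ m → n ≠ k ∧ n ≠ 2 * k) : 8 ∣ cooperS7Term n k := by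
  rcases k.eq_zero_or_pos with rfl | hk
  · simp [cooperS7Term, Nat.choose_eq_zero_of_lt (Nat.pos_of_ne_zero hn)]
  obtain ⟨c, hc⟩ := two_dvd_centralBinom_of_one_le hk
  unfold cooperS7Term
  rw [hc]
  by_cases hodd : Odd c
  · obtain ⟨m, rfl⟩ := (odd_centralBinom_div_two_iff k).1
      (by rwa [hc, Nat.mul_div_cancel_left _ two_pos])
    obtain ⟨hn₁, hn₂⟩ := h m rfl
    obtain ⟨e, he⟩ : 2 ∣ (2 ^ m).choose (n - 2 ^ m) :=
      Nat.prime_two.dvd_choose_pow (by omega) (by omega)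
    rw [he]
    exact ⟨(n + 2 ^ m).choose (2 * 2 ^ m) * c ^ 2 * e, by ring⟩
  · obtain ⟨d, rfl⟩ := Nat.not_odd_iff_even.1 hodd
    exact Dvd.dvd.mul_right (Dvd.dvd.mul_left ⟨2 * d ^ 2, by ring⟩ _) _

theorem eight_dvd_cooperS7Term_two_pow_add (m : ℕ) :
    8 ∣ cooperS7Term (2 ^ (m + 1)) (2 ^ m) + cooperS7Term (2 ^ (m + 1)) (2 ^ (m + 1)) := by
  have hB : ∀ j, ∃ c, Odd c ∧ (2 ^ j).centralBinom = 2 * c := fun j =>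
    ⟨_, (odd_centralBinom_div_two_iff _).2 ⟨j, rfl⟩,
      (Nat.mul_div_cancel' (two_dvd_centralBinom_of_one_le (by positivity))).symm⟩
  obtain ⟨c, hc, hBc⟩ := hB m
  obtain ⟨d, hd, hBd⟩ := hB (m + 1)
  obtain ⟨e, he⟩ : Even ((2 ^ m * 3).choose (2 * 2 ^ m) * c ^ 2 + d ^ 2) :=
    ((odd_choose_two_pow_mul_three m).mul hc.pow).add_odd hd.pow
  have hsum : cooperS7Term (2 ^ (m + 1)) (2 ^ m) + cooperS7Term (2 ^ (m + 1)) (2 ^ (m + 1))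
      = 4 * ((2 ^ m * 3).choose (2 * 2 ^ m) * c ^ 2 + d ^ 2) := by
    rw [pow_succ'] at hBd ⊢
    simp only [cooperS7Term, hBc, hBd, show 2 * 2 ^ m + 2 ^ m = 2 ^ m * 3 by ring,
      show 2 * 2 ^ m - 2 ^ m = 2 ^ m by omega, Nat.sub_self, ← two_mul, Nat.choose_self,
      Nat.choose_zero_right]
    ring
  rw [hsum, he]
  exact ⟨e, by ring⟩

theorem eight_dvd_cooperS7 {n : ℕ} (hn : 2 ≤ n) : (8 : ℤ) ∣ cooperS7 n := by
  rw [cooperS7_eq_sum_cooperS7Term]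
  suffices 8 ∣ ∑ k ∈ range (n + 1), cooperS7Term n k by
    exact_mod_cast Int.natCast_dvd_natCast.2 this
  by_cases hpow : ∃ m, n = 2 ^ (m + 1)
  · obtain ⟨m, rfl⟩ := hpow
    have hlt : 2 ^ m < 2 ^ (m + 1) := Nat.pow_lt_pow_right one_lt_two m.lt_succ_self
    rw [← sum_erase_add _ _ (self_mem_range_succ _),
      ← sum_erase_add _ _ (mem_erase.2 ⟨hlt.ne, mem_range.2 (by omega)⟩), add_assoc]
    refine dvd_add (dvd_sum fun k hk => ?_) (eight_dvd_cooperS7Term_two_pow_add m)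
    simp only [mem_erase, mem_range] at hk
    refine eight_dvd_cooperS7Term (by positivity) (by omega) fun j hj => ⟨by omega, fun h => ?_⟩
    rw [hj, ← pow_succ'] at h
    have hjm : m + 1 = j + 1 := Nat.pow_right_injective le_rfl h
    exact hk.1 (by rw [hj, show j = m by omega])
  · refine dvd_sum fun k hk =>
      eight_dvd_cooperS7Term (by omega) (Nat.lt_succ_iff.1 (mem_range.1 hk)) ?_
    rintro j rfl
    refine ⟨fun h => ?_, fun h => hpow ⟨j, by rw [h, pow_succ']⟩⟩
    rcases j with _ | j
    · rw [pow_zero] at h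
      omega
    · exact hpow ⟨j, h⟩

/-- For all `n ≥ 2`, Cooper's sequence `s₇` satisfies `u_{2n} ≡ uₙ (mod 8)`. -/
theorem cooperS7_two_mul_modEq (n : ℕ) (hn : 2 ≤ n) :
    cooperS7 (2 * n) ≡ cooperS7 n [ZMOD 8] :=
  (Int.emod_eq_zero_of_dvd (eight_dvd_cooperS7 (by omega))).trans
    (Int.emod_eq_zero_of_dvd (eight_dvd_cooperS7 hn)).symm
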